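/- Let F : ℝ^d → ℝ be (m,b)-dissipative (⟨w, ∇F(w)⟩ ≥ m‖w‖² - b) and C², and let β > 0. Define the Langevin generator ℒg = Δg - β⟨∇F, ∇g⟩ and the Lyapunov function V(w) = exp(mβ‖w‖²/4). Then for all w ∈ ℝ^d, ℒV(w) ≤ ((mβ(d + bβ))/2 - (mβ)²‖w‖²/4)·V(w). -/

import Mathlib

open Real

/-- The Laplacian of a function on Euclidean space, as the sum of second
partial derivatives along the coordinate directions. -/
noncomputable def laplacian {d : ℕ}
    (g : EuclideanSpace ℝ (Fin d) → ℝ) (w : EuclideanSpace ℝ (Fin d)) : ℝ :=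
  ∑ i : Fin d,
    fderiv ℝ (fun v => fderiv ℝ g v (EuclideanSpace.single i 1)) w
      (EuclideanSpace.single i 1)

/-- The generator of the (time-rescaled) overdamped Langevin diffusion:
`ℒ g = Δ g - β ⟨∇F, ∇g⟩`. -/
noncomputable def langevinGenerator {d : ℕ} (β : ℝ)
    (F g : EuclideanSpace ℝ (Fin d) → ℝ) (w : EuclideanSpace ℝ (Fin d)) : ℝ :=
  laplacian g w - β * (inner ℝ (gradient F w) (gradient g w) : ℝ)

/-!
For `V = exp (c ‖w‖²)` one has `∇V = 2c w V` and `∂ᵢ²V = (2c + 4c² wᵢ²) V`, so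
`ℒV = (2cd + 4c² ‖w‖² - 2cβ ⟨w, ∇F⟩) V`. Dissipativity bounds the drift term,
and with `c = mβ/4` it turns the coefficient `4c²` of `‖w‖²` into
`4c² - 2cβm = -(mβ)²/4`.
-/

open scoped RealInnerProductSpace

section ExpNormSq

variable {E : Type*} [NormedAddCommGroup E] [InnerProductSpace ℝ E]

theorem hasFDerivAt_exp_mul_norm_sq (c : ℝ) (w : E) :
    HasFDerivAt (fun v : E => exp (c * ‖v‖ ^ 2))
      ((exp (c * ‖w‖ ^ 2) * (2 * c)) • innerSL ℝ w) w := by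
  have h := (hasDerivAt_exp _).comp_hasFDerivAt w (((hasFDerivAt_id w).norm_sq).const_smul c)
  refine h.congr_fderiv ?_
  ext v
  simp
  ring

theorem fderiv_exp_mul_norm_sq_apply (c : ℝ) (w u : E) :
    fderiv ℝ (fun v : E => exp (c * ‖v‖ ^ 2)) w u =
      exp (c * ‖w‖ ^ 2) * (2 * c) * ⟪w, u⟫ := by
  simp [(hasFDerivAt_exp_mul_norm_sq c w).fderiv]

theorem gradient_exp_mul_norm_sq [CompleteSpace E] (c : ℝ) (w : E) :
    gradient (fun v : E => exp (c * ‖v‖ ^ 2)) w = (exp (c * ‖w‖ ^ 2) * (2 * c)) • w := by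
  refine (hasGradientAt_iff_hasFDerivAt.2
    ((hasFDerivAt_exp_mul_norm_sq c w).congr_fderiv ?_)).gradient
  ext v
  simp

theorem fderiv_fderiv_exp_mul_norm_sq_apply (c : ℝ) (w u : E) :
    fderiv ℝ (fun v : E => fderiv ℝ (fun v : E => exp (c * ‖v‖ ^ 2)) v u) w u =
      exp (c * ‖w‖ ^ 2) * (2 * c * ‖u‖ ^ 2 + (2 * c * ⟪w, u⟫) ^ 2) := by
  simp_rw [fderiv_exp_mul_norm_sq_apply]
  have h : HasFDerivAt (fun v : E => exp (c * ‖v‖ ^ 2) * (2 * c) * ⟪v, u⟫) _ w :=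
    ((hasFDerivAt_exp_mul_norm_sq c w).mul_const (2 * c)).mul
      ((hasFDerivAt_id w).inner ℝ (hasFDerivAt_const u w))
  rw [h.fderiv]
  simp
  ring

end ExpNormSq

theorem laplacian_exp_mul_norm_sq {d : ℕ} (c : ℝ) (w : EuclideanSpace ℝ (Fin d)) :
    laplacian (fun v => exp (c * ‖v‖ ^ 2)) w =
      exp (c * ‖w‖ ^ 2) * (2 * c * d + (2 * c) ^ 2 * ‖w‖ ^ 2) := by
  simp only [laplacian, fderiv_fderiv_exp_mul_norm_sq_apply, PiLp.norm_single,
    EuclideanSpace.inner_single_right]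
  simp only [norm_one, one_mul, conj_trivial, mul_pow, ← Finset.mul_sum, Finset.sum_add_distrib,
    Finset.sum_const, Finset.card_univ, Fintype.card_fin, nsmul_eq_mul,
    ← EuclideanSpace.real_norm_sq_eq]
  ring

theorem langevinGenerator_exp_mul_norm_sq {d : ℕ} (β c : ℝ)
    (F : EuclideanSpace ℝ (Fin d) → ℝ) (w : EuclideanSpace ℝ (Fin d)) :
    langevinGenerator β F (fun v => exp (c * ‖v‖ ^ 2)) w =
      exp (c * ‖w‖ ^ 2) *
        (2 * c * d + (2 * c) ^ 2 * ‖w‖ ^ 2 - 2 * c * β * ⟪w, gradient F w⟫) := by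
  rw [langevinGenerator, laplacian_exp_mul_norm_sq, gradient_exp_mul_norm_sq,
    real_inner_smul_right, real_inner_comm]
  ring

theorem lyapunov_drift_condition_general
    {d : ℕ} (F : EuclideanSpace ℝ (Fin d) → ℝ) (m b β : ℝ)
    (hm : 0 < m)
    (hdissip : ∀ w : EuclideanSpace ℝ (Fin d),
      (inner ℝ w (gradient F w) : ℝ) ≥ m * ‖w‖ ^ 2 - b)
    (V : EuclideanSpace ℝ (Fin d) → ℝ)
    (hV : ∀ w, V w = Real.exp (m * β * ‖w‖ ^ 2 / 4)) :
    ∀ w : EuclideanSpace ℝ (Fin d),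
      langevinGenerator β F V w ≤
        (m * β * (d + b * β) / 2 - (m * β) ^ 2 * ‖w‖ ^ 2 / 4) * V w := by
  intro w
  have hV_eq : V = fun v => exp (m * β / 4 * ‖v‖ ^ 2) := funext fun v => by rw [hV]; ring_nf
  subst hV_eq
  rw [langevinGenerator_exp_mul_norm_sq, mul_comm _ (exp _)]
  refine mul_le_mul_of_nonneg_left ?_ (exp_pos _).le
  have hdrift : 0 ≤ m * β ^ 2 / 2 * (⟪w, gradient F w⟫ - (m * ‖w‖ ^ 2 - b)) :=
    mul_nonneg (by positivity) (sub_nonneg.2 (hdissip w))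
  linear_combination hdrift

theorem lyapunov_drift_condition
    {d : ℕ} (F : EuclideanSpace ℝ (Fin d) → ℝ) (m b β : ℝ)
    (hm : 0 < m) (hb : 0 ≤ b) (hβ : 0 < β)
    (hF : ContDiff ℝ 2 F)
    (hdissip : ∀ w : EuclideanSpace ℝ (Fin d),
      (inner ℝ w (gradient F w) : ℝ) ≥ m * ‖w‖ ^ 2 - b)
    (V : EuclideanSpace ℝ (Fin d) → ℝ)
    (hV : ∀ w, V w = Real.exp (m * β * ‖w‖ ^ 2 / 4)) :
    ∀ w : EuclideanSpace ℝ (Fin d),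
      langevinGenerator β F V w ≤
        (m * β * (d + b * β) / 2 - (m * β) ^ 2 * ‖w‖ ^ 2 / 4) * V w :=
  lyapunov_drift_condition_general F m b β hm hdissip V hV
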